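/- Let θ be irrational, M ≥ 1, write P^in_θ(M) = (a₁,…,a_k) and P^out_θ(M) = (b₁,…,b_l) nonincreasingly, let m be minimal with ∑_{j=1}^m bⱼ ≥ a₁, and set b̄ := ∑_{j=1}^m bⱼ − a₁. Suppose k > 1 (so b̄ > 0). Then ⌊b̄θ⌋ = ∑_{j=1}^m ⌊bⱼθ⌋ − ⌈a₁θ⌉. -/

import Mathlib

open scoped Classical
open Finset

/-- The next (largest) entry of the incoming partition: the largest `a ∈ {1,…,M}`
such that `⌈aθ⌉/a < ⌈a'θ⌉/a'` for all `a' ∈ {1,…,a−1}`. -/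
noncomputable def pinStep (θ : ℝ) (M : ℕ) : ℕ :=
  WithBot.unbotD 0 (((Finset.Icc 1 M).filter (fun a : ℕ => ∀ a' ∈ Finset.Ico 1 a,
      ((⌈(a : ℝ) * θ⌉ : ℤ) : ℝ) / (a : ℝ) < ((⌈(a' : ℝ) * θ⌉ : ℤ) : ℝ) / (a' : ℝ))).max)

/-- Fuel-based recursion computing the incoming partition `P^in_θ(M)`. -/
noncomputable def pinListAux (θ : ℝ) : ℕ → ℕ → List ℕ
  | 0, _ => []
  | fuel + 1, M =>
      if M = 0 then [] else pinStep θ M :: pinListAux θ fuel (M - pinStep θ M)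

/-- The incoming partition `P^in_θ(M)`, listed in the order produced by the recursion
(which is nonincreasing). -/
noncomputable def pinList (θ : ℝ) (M : ℕ) : List ℕ := pinListAux θ M M

/-- The outgoing partition `P^out_θ(M) := P^in_{−θ}(M)`. -/
noncomputable def poutList (θ : ℝ) (M : ℕ) : List ℕ := pinList (-θ) M

/-!
The first part `a₁ = pinStep θ M` minimises `⌈aθ⌉/a` over `1 ≤ a ≤ M`. This forces
`⌈(a₁ + n)θ⌉ = ⌈a₁θ⌉ + ⌈nθ⌉` whenever `a₁ + n ≤ M`: the alternative `⌈a₁θ⌉ + ⌈nθ⌉ - 1` would give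
a smaller ratio at `a₁ + n`. Peeling off parts, `⌈·θ⌉` is additive along the prefixes of
`P^in_θ(M)`, so `⌊·θ⌋` is additive along the prefixes of `P^out_θ(M) = P^in_{-θ}(M)`.
With `S = b₁ + ⋯ + b_m = a₁ + b̄` and `θ` irrational,
`⌊b̄θ⌋ = ⌈b̄θ⌉ - 1 = ⌈Sθ⌉ - ⌈a₁θ⌉ - 1 = ⌊Sθ⌋ - ⌈a₁θ⌉ = ∑ ⌊bⱼθ⌋ - ⌈a₁θ⌉`.
That `b̄ > 0`: if `S = a₁`, then for the next part `b` both `⌊·θ⌋` and `⌈·θ⌉` would be additive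
on `a₁ + b`, which is impossible when `a₁θ`, `bθ` are irrational.
-/

section StrictRecords

variable {β : Type*} [LinearOrder β]

noncomputable def strictRecords (f : ℕ → β) (M : ℕ) : Finset ℕ :=
  (Icc 1 M).filter fun a => ∀ a' ∈ Ico 1 a, f a < f a'

lemma mem_strictRecords {f : ℕ → β} {M a : ℕ} :
    a ∈ strictRecords f M ↔ a ∈ Icc 1 M ∧ ∀ a' ∈ Ico 1 a, f a < f a' := by
  simp only [strictRecords, mem_filter]

lemma strictRecords_nonempty (f : ℕ → β) {M : ℕ} (hM : 1 ≤ M) :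
    (strictRecords f M).Nonempty :=
  ⟨1, mem_strictRecords.2 ⟨mem_Icc.2 ⟨le_rfl, hM⟩, by simp⟩⟩

lemma unbotD_max_strictRecords_mem_Icc (f : ℕ → β) {M : ℕ} (hM : 1 ≤ M) :
    (strictRecords f M).max.unbotD 0 ∈ Icc 1 M := by
  obtain ⟨p, hp⟩ := max_of_nonempty (strictRecords_nonempty f hM)
  rw [hp, WithBot.unbotD_coe]
  exact (mem_strictRecords.1 (mem_of_max hp)).1

lemma isMinOn_unbotD_max_strictRecords (f : ℕ → β) {M : ℕ} (hM : 1 ≤ M) :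
    IsMinOn f (Icc 1 M) ((strictRecords f M).max.unbotD 0) := by
  obtain ⟨p, hp⟩ := max_of_nonempty (strictRecords_nonempty f hM)
  rw [hp, WithBot.unbotD_coe]
  have hpRec := (mem_strictRecords.1 (mem_of_max hp)).2
  intro n hn
  by_contra hlt
  have hex : ∃ a, a ∈ Icc 1 M ∧ f a < f p := ⟨n, hn, lt_of_not_ge hlt⟩
  -- the first value below `f p` is a record, hence comes no later than the last record `p`
  obtain ⟨hqIcc, hqlt⟩ := Nat.find_spec hex
  have hqRec : Nat.find hex ∈ strictRecords f M := by
    refine mem_strictRecords.2 ⟨hqIcc, fun a' ha' => hqlt.trans_le (le_of_not_gt fun h => ?_)⟩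
    obtain ⟨h1, h2⟩ := mem_Ico.1 ha'
    exact Nat.find_min hex h2 ⟨mem_Icc.2 ⟨h1, (h2.trans_le (mem_Icc.1 hqIcc).2).le⟩, h⟩
  rcases (le_max_of_eq hqRec hp).lt_or_eq with hq | hq
  · exact lt_asymm hqlt (hpRec _ (mem_Ico.2 ⟨(mem_Icc.1 hqIcc).1, hq⟩))
  · exact hqlt.ne (by rw [hq])

end StrictRecords

noncomputable def ceilSlope (θ : ℝ) (a : ℕ) : ℝ := (⌈(a : ℝ) * θ⌉ : ℝ) / a

lemma ceil_add_eq_of_ceilSlope_le {θ : ℝ} {p n : ℕ} (hp : 0 < p)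
    (h : ceilSlope θ p ≤ ceilSlope θ (p + n)) :
    ⌈((p + n : ℕ) : ℝ) * θ⌉ = ⌈(p : ℝ) * θ⌉ + ⌈(n : ℝ) * θ⌉ := by
  have hcast : ((p + n : ℕ) : ℝ) * θ = p * θ + n * θ := by push_cast; ring
  refine le_antisymm (hcast ▸ Int.ceil_add_le _ _) (le_of_not_gt fun hlt => ?_)
  -- otherwise `⌈(p+n)θ⌉ = ⌈pθ⌉ + ⌈nθ⌉ - 1`, and then `⌈(p+n)θ⌉/(p+n) < ⌈pθ⌉/p`
  have hC : (⌈((p + n : ℕ) : ℝ) * θ⌉ : ℝ) ≤ ⌈(p : ℝ) * θ⌉ + ⌈(n : ℝ) * θ⌉ - 1 := by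
    exact_mod_cast Int.le_sub_one_of_lt hlt
  have hA := Int.le_ceil ((p : ℝ) * θ)
  have hB := Int.ceil_lt_add_one ((n : ℝ) * θ)
  have hp' : (0 : ℝ) < p := by exact_mod_cast hp
  have hn' : (0 : ℝ) ≤ n := n.cast_nonneg
  rw [ceilSlope, ceilSlope, div_le_div_iff₀ hp' (by positivity)] at h
  push_cast at h hC
  nlinarith [mul_le_mul_of_nonneg_right hA hn', mul_lt_mul_of_pos_left hB hp']

lemma Irrational.ceil_natCast_mul {θ : ℝ} (hθ : Irrational θ) {n : ℕ} (hn : n ≠ 0) :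
    ⌈(n : ℝ) * θ⌉ = ⌊(n : ℝ) * θ⌋ + 1 :=
  (Int.ceil_eq_floor_add_one_iff_notMem _).2 fun ⟨k, hk⟩ => (hθ.natCast_mul hn).ne_int k hk.symm

lemma pinStep_mem_Icc (θ : ℝ) {M : ℕ} (hM : 1 ≤ M) : pinStep θ M ∈ Icc 1 M :=
  unbotD_max_strictRecords_mem_Icc (ceilSlope θ) hM

lemma ceil_pinStep_add (θ : ℝ) {M n : ℕ} (hM : 1 ≤ M) (hn : pinStep θ M + n ≤ M) :
    ⌈((pinStep θ M + n : ℕ) : ℝ) * θ⌉ = ⌈(pinStep θ M : ℝ) * θ⌉ + ⌈(n : ℝ) * θ⌉ := by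
  have hp := (mem_Icc.1 (pinStep_mem_Icc θ hM)).1
  exact ceil_add_eq_of_ceilSlope_le hp <|
    isMinOn_unbotD_max_strictRecords (ceilSlope θ) hM (mem_Icc.2 ⟨by omega, hn⟩)

lemma pinListAux_zero_right (θ : ℝ) (fuel : ℕ) : pinListAux θ fuel 0 = [] := by
  cases fuel <;> rfl

lemma pinListAux_succ_of_pos (θ : ℝ) (fuel : ℕ) {M : ℕ} (hM : 1 ≤ M) :
    pinListAux θ (fuel + 1) M = pinStep θ M :: pinListAux θ fuel (M - pinStep θ M) := by
  simp [pinListAux, Nat.one_le_iff_ne_zero.1 hM]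

lemma sum_pinListAux (θ : ℝ) {fuel M : ℕ} (h : M ≤ fuel) : (pinListAux θ fuel M).sum = M := by
  induction fuel generalizing M with
  | zero => simp [Nat.le_zero.1 h, pinListAux_zero_right]
  | succ fuel ih =>
    rcases Nat.eq_zero_or_pos M with rfl | hM
    · simp [pinListAux_zero_right]
    have hp := mem_Icc.1 (pinStep_mem_Icc θ hM)
    rw [pinListAux_succ_of_pos θ fuel hM, List.sum_cons, ih (by omega)]
    omega

lemma pos_of_mem_pinListAux (θ : ℝ) {fuel M x : ℕ} (hx : x ∈ pinListAux θ fuel M) : 1 ≤ x := by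
  induction fuel generalizing M with
  | zero => simp [pinListAux] at hx
  | succ fuel ih =>
    rcases Nat.eq_zero_or_pos M with rfl | hM
    · simp [pinListAux_zero_right] at hx
    rw [pinListAux_succ_of_pos θ fuel hM, List.mem_cons] at hx
    rcases hx with rfl | hx
    · exact (mem_Icc.1 (pinStep_mem_Icc θ hM)).1
    · exact ih hx

lemma sum_map_ceil_take_pinListAux (θ : ℝ) {fuel M : ℕ} (h : M ≤ fuel) (k : ℕ) :
    (((pinListAux θ fuel M).take k).map fun n : ℕ => ⌈(n : ℝ) * θ⌉).sum =
      ⌈((((pinListAux θ fuel M).take k).sum : ℕ) : ℝ) * θ⌉ := by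
  induction fuel generalizing M k with
  | zero => simp [Nat.le_zero.1 h, pinListAux_zero_right]
  | succ fuel ih =>
    rcases Nat.eq_zero_or_pos M with rfl | hM
    · simp [pinListAux_zero_right]
    cases k with
    | zero => simp
    | succ k =>
      have hp := mem_Icc.1 (pinStep_mem_Icc θ hM)
      have hrest := sum_pinListAux θ (show M - pinStep θ M ≤ fuel by omega)
      have htake := List.sum_take_add_sum_drop (pinListAux θ fuel (M - pinStep θ M)) k
      rw [pinListAux_succ_of_pos θ fuel hM, List.take_succ_cons, List.map_cons, List.sum_cons,
        List.sum_cons, ih (by omega), ceil_pinStep_add θ hM (by omega)]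

lemma pinList_of_pos (θ : ℝ) {M : ℕ} (hM : 1 ≤ M) :
    pinList θ M = pinStep θ M :: pinListAux θ (M - 1) (M - pinStep θ M) := by
  obtain ⟨N, rfl⟩ : ∃ N, M = N + 1 := ⟨M - 1, by omega⟩
  exact pinListAux_succ_of_pos θ N hM

lemma headI_pinList (θ : ℝ) {M : ℕ} (hM : 1 ≤ M) : (pinList θ M).headI = pinStep θ M := by
  rw [pinList_of_pos θ hM, List.headI_cons]

lemma pinStep_lt_of_two_le_length_pinList (θ : ℝ) {M : ℕ} (h : 2 ≤ (pinList θ M).length) :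
    pinStep θ M < M := by
  rcases Nat.eq_zero_or_pos M with rfl | hM
  · simp [pinList, pinListAux] at h
  have hp := mem_Icc.1 (pinStep_mem_Icc θ hM)
  refine hp.2.lt_of_ne fun hpM => ?_
  rw [pinList_of_pos θ hM, hpM, Nat.sub_self, pinListAux_zero_right] at h
  simp at h

lemma sum_poutList (θ : ℝ) (M : ℕ) : (poutList θ M).sum = M :=
  sum_pinListAux (-θ) le_rfl

lemma sum_take_poutList_le (θ : ℝ) (M k : ℕ) : ((poutList θ M).take k).sum ≤ M :=
  (sum_poutList θ M).le.trans' <| (List.take_sublist k _).sum_le_sum fun _ _ => Nat.zero_le _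

lemma pos_of_mem_poutList {θ : ℝ} {M b : ℕ} (hb : b ∈ poutList θ M) : 1 ≤ b :=
  pos_of_mem_pinListAux (-θ) hb

lemma sum_map_floor_take_poutList (θ : ℝ) (M k : ℕ) :
    (((poutList θ M).take k).map fun n : ℕ => ⌊(n : ℝ) * θ⌋).sum =
      ⌊((((poutList θ M).take k).sum : ℕ) : ℝ) * θ⌋ := by
  have h := sum_map_ceil_take_pinListAux (-θ) (le_refl M) k
  simp only [mul_neg, Int.ceil_neg] at h
  rw [← neg_inj, List.sum_neg, List.map_map]
  exact h

lemma pinStep_lt_sum_take_poutList {θ : ℝ} (hθ : Irrational θ) {M m : ℕ} (hM : pinStep θ M < M)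
    (hm : pinStep θ M ≤ ((poutList θ M).take m).sum) :
    pinStep θ M < ((poutList θ M).take m).sum := by
  refine hm.lt_of_ne fun hS => ?_
  have hM1 := Nat.one_le_of_lt hM
  have ha := (mem_Icc.1 (pinStep_mem_Icc θ hM1)).1
  have hml : m < (poutList θ M).length := by
    by_contra h
    rw [List.take_of_length_le (not_lt.1 h), sum_poutList] at hS
    omega
  obtain ⟨b, hb⟩ : ∃ b, (poutList θ M)[m] = b := ⟨_, rfl⟩
  have hb1 : 1 ≤ b := pos_of_mem_poutList (hb ▸ List.getElem_mem hml)
  have hsum : ((poutList θ M).take (m + 1)).sum = pinStep θ M + b := by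
    rw [List.sum_take_succ _ _ hml, hS, hb]
  have hle : pinStep θ M + b ≤ M := hsum ▸ sum_take_poutList_le θ M (m + 1)
  have hfloor : ⌊((pinStep θ M + b : ℕ) : ℝ) * θ⌋ = ⌊(pinStep θ M : ℝ) * θ⌋ + ⌊(b : ℝ) * θ⌋ := by
    rw [← hsum, ← sum_map_floor_take_poutList, List.map_take, List.sum_take_succ _ _ (by simpa),
      ← List.map_take, sum_map_floor_take_poutList, ← hS, List.getElem_map, hb]
  have hceil := ceil_pinStep_add θ hM1 hle
  rw [hθ.ceil_natCast_mul (by omega), hθ.ceil_natCast_mul (by omega),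
    hθ.ceil_natCast_mul (by omega), hfloor] at hceil
  omega

theorem floor_bbar_general (θ : ℝ) (hθ : Irrational θ) (M : ℕ) (m : ℕ)
    (hm1 : (pinList θ M).headI ≤ (((poutList θ M).take m).sum))
    (hk : 2 ≤ (pinList θ M).length) :
    ⌊((((((poutList θ M).take m).sum : ℤ) - ((pinList θ M).headI : ℤ)) : ℤ) : ℝ) * θ⌋ =
      (((poutList θ M).take m).map (fun b => ⌊(b : ℝ) * θ⌋)).sum -
        ⌈((pinList θ M).headI : ℝ) * θ⌉ := by
  have ha := pinStep_lt_of_two_le_length_pinList θ hk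
  have hM := Nat.one_le_of_lt ha
  have ha1 := (mem_Icc.1 (pinStep_mem_Icc θ hM)).1
  rw [headI_pinList θ hM] at hm1 ⊢
  -- the statement maps over the list coerced to `List ℝ`, i.e. over `l >>= fun b => pure ↑b`
  simp only [bind_pure_comp, List.map_eq_map, List.map_map, Function.comp_def]
  rw [sum_map_floor_take_poutList]
  have hlt := pinStep_lt_sum_take_poutList hθ ha hm1
  obtain ⟨n, hn⟩ := Nat.exists_eq_add_of_le hlt.le
  have hle := sum_take_poutList_le θ M m
  rw [hn] at hle hlt ⊢
  have hceil := ceil_pinStep_add θ hM hle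
  rw [hθ.ceil_natCast_mul (n := pinStep θ M + n) (by omega),
    hθ.ceil_natCast_mul (n := n) (by omega)] at hceil
  have hcast : ((((pinStep θ M + n : ℕ) : ℤ) - (pinStep θ M : ℤ) : ℤ) : ℝ) = n := by
    push_cast; ring
  rw [hcast]
  omega

/-- with `a₁` the first entry of `P^in_θ(M)`, `b` the outgoing partition,
`m` minimal with `∑_{j≤m} bⱼ ≥ a₁`, and `b̄ := ∑_{j≤m} bⱼ − a₁` (positive since `k > 1`),
one has `⌊b̄θ⌋ = ∑_{j≤m} ⌊bⱼθ⌋ − ⌈a₁θ⌉`. -/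
theorem floor_bbar (θ : ℝ) (hθ : Irrational θ) (M : ℕ) (hM : 1 ≤ M) (m : ℕ)
    (hml : m ≤ (poutList θ M).length)
    (hm1 : (pinList θ M).headI ≤ (((poutList θ M).take m).sum))
    (hm2 : ∀ m' < m, (((poutList θ M).take m').sum) < (pinList θ M).headI)
    (hk : 2 ≤ (pinList θ M).length) :
    ⌊((((((poutList θ M).take m).sum : ℤ) - ((pinList θ M).headI : ℤ)) : ℤ) : ℝ) * θ⌋ =
      (((poutList θ M).take m).map (fun b => ⌊(b : ℝ) * θ⌋)).sum -
        ⌈((pinList θ M).headI : ℝ) * θ⌉ :=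
  floor_bbar_general θ hθ M m hm1 hk
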